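/- arXiv:2301.09979 — 2 statements merged into one kernel-verified Lean document; each statement's English description precedes it below -/
import Mathlib

section
/- For every even integer Δ ≥ 4 there exists a finite simple isolate-free graph G with maximum degree Δ(G) = Δ and a total coalition partition of G with at least Δ²/4 + Δ + 1 classes; hence TC(G) ≥ Δ²/4 + Δ + 1. -/
open scoped Classical

variable {V : Type*}

/-- `S` is a total dominating set of `G`: every vertex of `G` has a neighbor in `S`. -/
def TotalDomSet (G : SimpleGraph V) (S : Finset V) : Prop :=
  ∀ v : V, ∃ u ∈ S, G.Adj v u

/-- Two disjoint sets `A`, `B` form a total coalition in `G` if neither is a total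
dominating set but their union is. -/
def TotalCoalition [DecidableEq V] (G : SimpleGraph V) (A B : Finset V) : Prop :=
  Disjoint A B ∧ ¬ TotalDomSet G A ∧ ¬ TotalDomSet G B ∧ TotalDomSet G (A ∪ B)

/-- A graph is isolate-free if every vertex has a neighbor. -/
def IsolateFree (G : SimpleGraph V) : Prop :=
  ∀ v : V, ∃ u : V, G.Adj v u

/-- `Ψ` is a total coalition partition of `G`: a partition of the vertex set into
nonempty classes, none of which is a total dominating set, such that every class
forms a total coalition with at least one other class. -/
def IsTCPartition [DecidableEq V] (G : SimpleGraph V) (Ψ : Finset (Finset V)) : Prop :=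
  (∀ C ∈ Ψ, C.Nonempty) ∧
  (∀ v : V, ∃! C, C ∈ Ψ ∧ v ∈ C) ∧
  (∀ C ∈ Ψ, ¬ TotalDomSet G C) ∧
  (∀ C ∈ Ψ, ∃ D ∈ Ψ, D ≠ C ∧ TotalCoalition G C D)

/-- The total coalition graph `TCG(G,Ψ)`: vertices are the classes of `Ψ`, and two
classes are adjacent iff they form a total coalition. -/
def TCG [DecidableEq V] (G : SimpleGraph V) (Ψ : Finset (Finset V)) :
    SimpleGraph {C // C ∈ Ψ} where
  Adj C D := C ≠ D ∧ TotalCoalition G (C : Finset V) (D : Finset V)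
  symm := by
    constructor
    rintro C D ⟨hne, hd, hA, hB, hU⟩
    exact ⟨hne.symm, hd.symm, hB, hA, by rwa [Finset.union_comm]⟩
  loopless := by constructor; rintro C ⟨hne, _⟩; exact hne rfl

/-!
Write `Δ = 2k`. The graph has vertices `x j, c j, d j` (`j ≤ k`) and `y j i, z j i` (`i < k`);
its classes are the `k + 1` sets `H j = {x j, c j, d j, …}` and the `k (k + 1)` singletons
`{y j i}`, which makes `(k + 1)² = Δ²/4 + Δ + 1` classes. No class is total dominating, since
`x j` has no neighbour in `H j`; but every vertex without a neighbour in `H j` is adjacent to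
every `y j i`, so `H j` and `{y j i}` form a total coalition. The cliques of `z`-vertices give
each `y`-vertex a neighbour in every `H j` while keeping all degrees at most `2k`, a value
attained at `c j`.
-/

open Finset

section General

variable {W ι : Type*} {G : SimpleGraph V} {G' : SimpleGraph W}

lemma IsTCPartition.isolateFree [DecidableEq V] {Ψ : Finset (Finset V)}
    (h : IsTCPartition G Ψ) : IsolateFree G := by
  obtain ⟨-, hpart, -, hpair⟩ := h
  intro v
  obtain ⟨C, ⟨hC, -⟩, -⟩ := hpart v
  obtain ⟨D, -, -, -, -, -, hCD⟩ := hpair C hC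
  obtain ⟨u, -, hvu⟩ := hCD v
  exact ⟨u, hvu⟩

lemma totalDomSet_map_iff (e : G ≃g G') (S : Finset V) :
    TotalDomSet G' (S.map e.toEquiv.toEmbedding) ↔ TotalDomSet G S := by
  refine ⟨fun h v => ?_, fun h w => ?_⟩
  · obtain ⟨_, hwS, hvw⟩ := h (e v)
    obtain ⟨u, hu, rfl⟩ := mem_map.1 hwS
    exact ⟨u, hu, e.map_rel_iff.1 hvw⟩
  · obtain ⟨u, hu, hwu⟩ := h (e.symm w)
    exact ⟨e u, mem_map_of_mem _ hu, by simpa using e.map_rel_iff.2 hwu⟩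

lemma TotalCoalition.map [DecidableEq V] [DecidableEq W] (e : G ≃g G') {A B : Finset V}
    (h : TotalCoalition G A B) :
    TotalCoalition G' (A.map e.toEquiv.toEmbedding) (B.map e.toEquiv.toEmbedding) := by
  obtain ⟨hAB, hA, hB, hU⟩ := h
  refine ⟨(disjoint_map _).2 hAB, ?_, ?_, ?_⟩
  · rwa [totalDomSet_map_iff]
  · rwa [totalDomSet_map_iff]
  · rwa [← map_union, totalDomSet_map_iff]

lemma IsTCPartition.map [DecidableEq V] [DecidableEq W] {Ψ : Finset (Finset V)}
    (e : G ≃g G') (h : IsTCPartition G Ψ) :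
    IsTCPartition G' (Ψ.map (mapEmbedding e.toEquiv.toEmbedding).toEmbedding) := by
  obtain ⟨hne, hpart, hnot, hpair⟩ := h
  simp only [IsTCPartition, mem_map, RelEmbedding.coe_toEmbedding, mapEmbedding_apply,
    forall_exists_index, and_imp, forall_apply_eq_imp_iff₂]
  refine ⟨fun C hC => (hne C hC).map, fun w => ?_,
    fun C hC => (totalDomSet_map_iff e C).not.2 (hnot C hC), fun C hC => ?_⟩
  · obtain ⟨C, ⟨hC, hwC⟩, huniq⟩ := hpart (e.symm w)
    refine ⟨C.map e.toEquiv.toEmbedding, ⟨⟨C, hC, rfl⟩, mem_map.2 ⟨_, hwC, by simp⟩⟩, ?_⟩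
    rintro _ ⟨⟨D, hD, rfl⟩, hwD⟩
    obtain ⟨v, hvD, rfl⟩ := mem_map.1 hwD
    rw [huniq D ⟨hD, by simpa using hvD⟩]
  · obtain ⟨D, hD, hDC, hCD⟩ := hpair C hC
    exact ⟨_, ⟨D, hD, rfl⟩, fun h => hDC (map_injective _ h), hCD.map e⟩

lemma degree_le_card_of_injOn [Fintype V] [DecidableRel G.Adj] (v : V) (f : V → ι)
    (s : Finset ι) (hmaps : ∀ u, G.Adj v u → f u ∈ s)
    (hinj : ∀ u w, G.Adj v u → G.Adj v w → f u = f w → u = w) : G.degree v ≤ #s := by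
  rw [← G.card_neighborFinset_eq_degree]
  refine card_le_card_of_injOn f (fun u hu => hmaps u ?_) (fun u hu w hw => hinj u w ?_ ?_)
  all_goals simp_all

lemma card_le_degree_of_injOn [Fintype V] [DecidableRel G.Adj] (v : V) (g : ι → V)
    (s : Finset ι) (hadj : ∀ i ∈ s, G.Adj v (g i)) (hinj : Set.InjOn g s) : #s ≤ G.degree v := by
  rw [← G.card_neighborFinset_eq_degree]
  exact card_le_card_of_injOn g (fun i hi => by simpa using hadj i hi) hinj

end General

section Fibers

variable {κ : Type*} [Fintype V] [DecidableEq κ]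

def fiber (f : V → κ) (a : κ) : Finset V := {v | f v = a}

@[simp] lemma mem_fiber {f : V → κ} {a : κ} {v : V} : v ∈ fiber f a ↔ f v = a := by
  simp [fiber]

lemma fiber_injective {f : V → κ} (hf : Function.Surjective f) : Function.Injective (fiber f) := by
  intro a b hab
  obtain ⟨v, rfl⟩ := hf a
  simpa using (Finset.ext_iff.1 hab v).1 (by simp)

variable [Fintype κ] [DecidableEq V]

def fiberPartition (f : V → κ) : Finset (Finset V) := univ.image (fiber f)

lemma card_fiberPartition {f : V → κ} (hf : Function.Surjective f) :
    #(fiberPartition f) = Fintype.card κ :=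
  card_image_of_injective _ (fiber_injective hf)

lemma isTCPartition_fiberPartition (G : SimpleGraph V) {f : V → κ} (hf : Function.Surjective f)
    (hnot : ∀ a, ¬ TotalDomSet G (fiber f a))
    (hpair : ∀ a, ∃ b ≠ a, TotalDomSet G (fiber f a ∪ fiber f b)) :
    IsTCPartition G (fiberPartition f) := by
  simp only [IsTCPartition, fiberPartition, mem_image, mem_univ, true_and, forall_exists_index,
    forall_apply_eq_imp_iff, exists_exists_eq_and]
  refine ⟨fun a => ?_, fun v => ⟨_, ⟨⟨f v, rfl⟩, by simp⟩, ?_⟩, hnot, fun a => ?_⟩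
  · obtain ⟨v, rfl⟩ := hf a
    exact ⟨v, by simp⟩
  · rintro C ⟨⟨a, rfl⟩, hv⟩
    simp_all
  · obtain ⟨b, hba, hU⟩ := hpair a
    refine ⟨b, fun h => hba (fiber_injective hf h), disjoint_left.2 fun v hva hvb => ?_, hnot a,
      hnot b, hU⟩
    simp_all

end Fibers

namespace TCExtremal

inductive Vertex (k : ℕ) : Type
  | x : Fin (k + 1) → Vertex k
  | y : Fin (k + 1) → Fin k → Vertex k
  | z : Fin (k + 1) → Fin k → Vertex k
  | c : Fin (k + 1) → Vertex k
  | d : Fin (k + 1) → Vertex k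
  deriving DecidableEq, Fintype

open Vertex

variable {k : ℕ}

def adjRel : Vertex k → Vertex k → Prop
  | x j, y l _ => j = l
  | c j, x l => j ≠ l
  | c j, y l _ => j = l
  | z l _, y l' _ => l = l'
  | z l t, z l' t' => l = l' ∧ t ≠ t'
  | z l t, d j => l.succAbove t = j
  | d j, d l => j ≠ l
  | _, _ => False

variable (k) in
def graph : SimpleGraph (Vertex k) := SimpleGraph.fromRel adjRel

/-- `z l t` has "target" `l` (it is adjacent to the `y l ·`) and lies in the class of its
"source" `l.succAbove t`, so each ordered pair of distinct indices occurs exactly once. -/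
def label : Vertex k → Fin (k + 1) ⊕ Fin (k + 1) × Fin k
  | x j | c j | d j => .inl j
  | z l t => .inl (l.succAbove t)
  | y j i => .inr (j, i)

lemma label_surjective : Function.Surjective (label (k := k))
  | .inl j => ⟨x j, rfl⟩
  | .inr (j, i) => ⟨y j i, rfl⟩

lemma not_totalDomSet_fiber (a : Fin (k + 1) ⊕ Fin (k + 1) × Fin k) :
    ¬ TotalDomSet (graph k) (fiber label a) := by
  intro hS
  rcases a with j | ⟨j, i⟩
  · obtain ⟨u, hu, hadj⟩ := hS (x j)
    cases u <;> simp_all [graph, adjRel, label]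
  · obtain ⟨u, hu, hadj⟩ := hS (y j i)
    cases u <;> simp_all [graph, label]

lemma totalDomSet_fiber_union (j : Fin (k + 1)) (i : Fin k) :
    TotalDomSet (graph k) (fiber label (.inl j) ∪ fiber label (.inr (j, i))) := by
  intro v
  simp only [mem_union, mem_fiber, graph, SimpleGraph.fromRel_adj]
  cases v with
  | x l =>
    by_cases hl : l = j
    · exact ⟨y j i, by simp [label], by simp [adjRel, hl]⟩
    · exact ⟨c j, by simp [label], by simp [adjRel, Ne.symm hl]⟩
  | y l _ =>
    by_cases hl : l = j
    · exact ⟨x j, by simp [label], by simp [adjRel, hl]⟩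
    · obtain ⟨t, ht⟩ := Fin.exists_succAbove_eq (Ne.symm hl)
      exact ⟨z l t, by simp [label, ht], by simp [adjRel]⟩
  | z l t =>
    by_cases hl : l = j
    · exact ⟨y j i, by simp [label], by simp [adjRel, hl]⟩
    by_cases hs : l.succAbove t = j
    · exact ⟨d j, by simp [label], by simp [adjRel, hs]⟩
    · obtain ⟨t', ht'⟩ := Fin.exists_succAbove_eq (Ne.symm hl)
      have htt' : t ≠ t' := by rintro rfl; exact hs ht'
      exact ⟨z l t', by simp [label, ht'], by simp [adjRel, htt']⟩
  | c l =>
    by_cases hl : l = j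
    · exact ⟨y j i, by simp [label], by simp [adjRel, hl]⟩
    · exact ⟨x j, by simp [label], by simp [adjRel, hl]⟩
  | d l =>
    by_cases hl : l = j
    · obtain ⟨t, ht⟩ := Fin.exists_succAbove_eq (j.succAbove_ne i).symm
      exact ⟨z (j.succAbove i) t, by simp [label, ht], by simp [adjRel, ht, hl]⟩
    · exact ⟨d j, by simp [label], by simp [adjRel, hl]⟩

lemma isTCPartition_graph (hk : 0 < k) : IsTCPartition (graph k) (fiberPartition label) :=
  isTCPartition_fiberPartition _ label_surjective not_totalDomSet_fiber fun
    | .inl j => ⟨.inr (j, ⟨0, hk⟩), Sum.inr_ne_inl, totalDomSet_fiber_union j _⟩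
    | .inr (j, i) =>
      ⟨.inl j, Sum.inl_ne_inr, union_comm (α := Vertex k) .. ▸ totalDomSet_fiber_union j i⟩

lemma card_fiberPartition_label : #(fiberPartition (label (k := k))) = (k + 1) ^ 2 := by
  rw [card_fiberPartition label_surjective]
  simp only [Fintype.card_sum, Fintype.card_prod, Fintype.card_fin]
  ring

lemma degree_le (hk : 2 ≤ k) (v : Vertex k) : (graph k).degree v ≤ 2 * k := by
  cases v with
  | x j =>
    simpa [two_mul] using degree_le_card_of_injOn (x j)
      (fun | y _ i => .inl i | c l => .inr l | _ => .inr j) (univ.disjSum (univ.erase j))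
      (by rintro (_ | _ | _ | _ | _) <;> simp [graph, adjRel])
      (by rintro (_ | _ | _ | _ | _) (_ | _ | _ | _ | _) hu hw huw <;> simp_all [graph, adjRel])
  | y j i =>
    have key := degree_le_card_of_injOn (G := graph k) (y j i)
      (fun | z _ t => some (some t) | x _ => some none | _ => none) univ (by simp)
      (by rintro (_ | _ | _ | _ | _) (_ | _ | _ | _ | _) hu hw huw <;> simp_all [graph, adjRel])
    simp only [card_univ, Fintype.card_option, Fintype.card_fin] at key
    omega
  | z l t =>
    simpa [two_mul] using degree_le_card_of_injOn (z l t)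
      (fun | y _ i => .inl i | z _ t' => .inr t' | _ => .inr t) (univ.disjSum univ) (by simp)
      (by
        rintro (_ | _ | _ | _ | _) (_ | _ | _ | _ | _) hu hw huw <;>
          simp_all [graph, adjRel, eq_comm])
  | c j =>
    simpa [two_mul] using degree_le_card_of_injOn (c j)
      (fun | y _ i => .inl i | x l => .inr l | _ => .inr j) (univ.disjSum (univ.erase j))
      (by rintro (_ | _ | _ | _ | _) <;> simp [graph, adjRel, eq_comm])
      (by rintro (_ | _ | _ | _ | _) (_ | _ | _ | _ | _) hu hw huw <;> simp_all [graph, adjRel])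
  | d j =>
    simpa [two_mul] using degree_le_card_of_injOn (d j)
      (fun | z l _ => .inl l | d l => .inr l | _ => .inr j) ((univ.erase j).disjSum (univ.erase j))
      (by rintro (_ | _ | _ | _ | _) hadj <;> simp_all [graph, adjRel, eq_comm])
      (by
        rintro (_ | _ | _ | _ | _) (_ | _ | _ | _ | _) hu hw huw <;>
          simp_all [graph, adjRel, eq_comm])

lemma two_mul_le_degree_c (j : Fin (k + 1)) : 2 * k ≤ (graph k).degree (c j) := by
  simpa [two_mul] using card_le_degree_of_injOn (c j) (Sum.elim (y j) x)
    (univ.disjSum (univ.erase j)) (by rintro (_ | _) <;> simp [graph, adjRel, eq_comm])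
    (by rintro (_ | _) - (_ | _) - <;> simp)

lemma maxDegree_graph (hk : 2 ≤ k) : (graph k).maxDegree = 2 * k :=
  le_antisymm ((graph k).maxDegree_le_of_forall_degree_le _ (degree_le hk))
    ((two_mul_le_degree_c 0).trans ((graph k).degree_le_maxDegree _))

end TCExtremal

/-- For every even `Δ ≥ 4` there is a finite isolate-free graph `G` with maximum degree
`Δ` admitting a total coalition partition with at least `Δ²/4 + Δ + 1` classes. -/
theorem statement_6 (Δ : ℕ) (hΔ : 4 ≤ Δ) (heven : Even Δ) :
    ∃ (n : ℕ) (G : SimpleGraph (Fin n)) (_ : DecidableRel G.Adj)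
      (Ψ : Finset (Finset (Fin n))),
      IsolateFree G ∧ G.maxDegree = Δ ∧ IsTCPartition G Ψ ∧
      Δ ^ 2 / 4 + Δ + 1 ≤ Ψ.card := by
  obtain ⟨k, rfl⟩ := heven
  let e := (TCExtremal.graph k).overFinIso rfl
  have hΨ := (TCExtremal.isTCPartition_graph (by omega)).map e
  refine ⟨_, _, inferInstance, _, hΨ.isolateFree, ?_, hΨ, ?_⟩
  · rw [← e.maxDegree_eq, TCExtremal.maxDegree_graph (by omega)]
    ring
  · rw [card_map, TCExtremal.card_fiberPartition_label, show (k + k) ^ 2 = k ^ 2 * 4 by ring, Nat.mul_div_cancel _ four_pos]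
    exact le_of_eq (by ring)
end

section
/- Let G be a finite simple isolate-free graph with maximum degree Δ(G) = 3, and let Ψ be a total coalition partition of G. If V₁, V₂, V₃, V₄, V₅, V₆ are six pairwise distinct classes of Ψ such that V₁V₂, V₂V₃, V₃V₄, V₄V₅, V₅V₆ and V₆V₁ are all total coalitions (i.e., they form a 6-cycle in the total coalition graph TCG(G,Ψ)), then each of V₁ ∪ V₄, V₂ ∪ V₅ and V₃ ∪ V₆ is a total dominating set of G, so each of these three opposite pairs forms a total coalition. -/
open scoped Classical

variable {V : Type*}

/-! A vertex `v` with no neighbour in `V₁ ∪ V₄` gets, from the four coalitions `V₁V₂`, `V₃V₄`,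
`V₄V₅`, `V₆V₁`, a neighbour in each of `V₂, V₃, V₅, V₆`.
These are four distinct, hence disjoint, classes, so `v` would have degree at least `4`.
Rotating the cycle handles the other two opposite pairs. -/

section

variable {G : SimpleGraph V}

lemma TotalDomSet.exists_adj_mem_right [DecidableEq V] {A B : Finset V}
    (h : TotalDomSet G (A ∪ B)) {v : V} (hA : ∀ u ∈ A, ¬ G.Adj v u) : ∃ u ∈ B, G.Adj v u := by
  obtain ⟨u, hu, hvu⟩ := h v
  exact ⟨u, (Finset.mem_union.mp hu).resolve_left fun huA => hA u huA hvu, hvu⟩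

lemma TotalDomSet.exists_adj_mem_left [DecidableEq V] {A B : Finset V}
    (h : TotalDomSet G (A ∪ B)) {v : V} (hB : ∀ u ∈ B, ¬ G.Adj v u) : ∃ u ∈ A, G.Adj v u :=
  (Finset.union_comm A B ▸ h).exists_adj_mem_right hB

lemma card_le_degree_of_pairwiseDisjoint [Fintype V] [DecidableRel G.Adj] {ι : Type*}
    {s : Finset ι} {P : ι → Finset V} (hP : (s : Set ι).PairwiseDisjoint P) {v : V}
    (h : ∀ i ∈ s, ∃ u ∈ P i, G.Adj v u) : s.card ≤ G.degree v := by
  have : Nonempty V := ⟨v⟩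
  choose! f hfP hadj using h
  rw [← G.card_neighborFinset_eq_degree]
  refine Finset.card_le_card_of_injOn f (fun i hi => ?_) fun i hi j hj hij => ?_
  · simpa using hadj i hi
  · exact hP.elim_finset hi hj (f i) (hfP i hi) (hij ▸ hfP j hj)

end

lemma pairwiseDisjoint_of_existsUnique_mem {Ψ : Finset (Finset V)}
    (hu : ∀ v : V, ∃! C, C ∈ Ψ ∧ v ∈ C) : (Ψ : Set (Finset V)).PairwiseDisjoint id := by
  intro A hA B hB hne
  refine Finset.disjoint_left.mpr fun x hxA hxB => hne ?_
  obtain ⟨C, _, huniq⟩ := hu x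
  exact (huniq A ⟨hA, hxA⟩).trans (huniq B ⟨hB, hxB⟩).symm

namespace IsTCPartition

variable [DecidableEq V] {G : SimpleGraph V} {Ψ : Finset (Finset V)}

lemma totalCoalition_of_totalDomSet_union (hΨ : IsTCPartition G Ψ) {A B : Finset V}
    (hA : A ∈ Ψ) (hB : B ∈ Ψ) (hne : A ≠ B) (h : TotalDomSet G (A ∪ B)) :
    TotalCoalition G A B :=
  ⟨pairwiseDisjoint_of_existsUnique_mem hΨ.2.1 hA hB hne, hΨ.2.2.1 A hA, hΨ.2.2.1 B hB, h⟩

lemma totalCoalition_of_hexagon [Fintype V] [DecidableRel G.Adj] (hΨ : IsTCPartition G Ψ)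
    (hΔ : G.maxDegree ≤ 3) {A B C D E F : Finset V} (hmem : ∀ X ∈ [A, B, C, D, E, F], X ∈ Ψ)
    (hnd : [A, B, C, D, E, F].Nodup) (hAB : TotalDomSet G (A ∪ B))
    (hCD : TotalDomSet G (C ∪ D)) (hDE : TotalDomSet G (D ∪ E)) (hFA : TotalDomSet G (F ∪ A)) :
    TotalCoalition G A D := by
  have hAD : A ≠ D := by simp_all
  refine hΨ.totalCoalition_of_totalDomSet_union (by simp [hmem]) (by simp [hmem]) hAD ?_
  intro v
  by_contra! hv
  have hvA : ∀ u ∈ A, ¬ G.Adj v u := fun u hu => hv u (Finset.mem_union_left D hu)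
  have hvD : ∀ u ∈ D, ¬ G.Adj v u := fun u hu => hv u (Finset.mem_union_right A hu)
  set s := [B, C, E, F].toFinset
  have hs : s.card = 4 := List.toFinset_card_of_nodup (hnd.sublist (by simp))
  have hsΨ : s ⊆ Ψ := fun X hX =>
    hmem X (List.Sublist.subset (by simp) (List.mem_toFinset.mp hX))
  have hadj : ∀ X ∈ s, ∃ u ∈ id X, G.Adj v u := by
    simp only [s, List.mem_toFinset, List.mem_cons, List.not_mem_nil, or_false, id]
    rintro X (rfl | rfl | rfl | rfl)
    exacts [hAB.exists_adj_mem_right hvA, hCD.exists_adj_mem_left hvD,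
      hDE.exists_adj_mem_right hvD, hFA.exists_adj_mem_left hvA]
  have h4 : 4 ≤ G.degree v :=
    hs ▸ card_le_degree_of_pairwiseDisjoint
      ((pairwiseDisjoint_of_existsUnique_mem hΨ.2.1).subset (by simpa using hsΨ)) hadj
  have h3 : G.degree v ≤ 3 := (G.degree_le_maxDegree v).trans hΔ
  omega

end IsTCPartition

theorem statement_18_general [Fintype V] [DecidableEq V]
    (G : SimpleGraph V) [DecidableRel G.Adj]
    (hΔ : G.maxDegree = 3)
    (Ψ : Finset (Finset V)) (hΨ : IsTCPartition G Ψ)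
    (V₁ V₂ V₃ V₄ V₅ V₆ : Finset V)
    (h1 : V₁ ∈ Ψ) (h2 : V₂ ∈ Ψ) (h3 : V₃ ∈ Ψ) (h4 : V₄ ∈ Ψ) (h5 : V₅ ∈ Ψ) (h6 : V₆ ∈ Ψ)
    (hdist : [V₁, V₂, V₃, V₄, V₅, V₆].Pairwise (· ≠ ·))
    (h12 : TotalCoalition G V₁ V₂) (h23 : TotalCoalition G V₂ V₃)
    (h34 : TotalCoalition G V₃ V₄) (h45 : TotalCoalition G V₄ V₅)
    (h56 : TotalCoalition G V₅ V₆) (h61 : TotalCoalition G V₆ V₁) :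
    (TotalDomSet G (V₁ ∪ V₄) ∧ TotalCoalition G V₁ V₄) ∧
    (TotalDomSet G (V₂ ∪ V₅) ∧ TotalCoalition G V₂ V₅) ∧
    (TotalDomSet G (V₃ ∪ V₆) ∧ TotalCoalition G V₃ V₆) := by
  have hmem : ∀ X ∈ [V₁, V₂, V₃, V₄, V₅, V₆], X ∈ Ψ := by simp [h1, h2, h3, h4, h5, h6]
  have c14 : TotalCoalition G V₁ V₄ :=
    hΨ.totalCoalition_of_hexagon hΔ.le hmem hdist h12.2.2.2 h34.2.2.2 h45.2.2.2 h61.2.2.2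
  have c25 : TotalCoalition G V₂ V₅ :=
    hΨ.totalCoalition_of_hexagon hΔ.le
      (fun X hX => hmem X ((List.rotate_perm _ 1).mem_iff.mp hX))
      ((List.rotate_perm _ 1).nodup_iff.mpr hdist) h23.2.2.2 h45.2.2.2 h56.2.2.2 h12.2.2.2
  have c36 : TotalCoalition G V₃ V₆ :=
    hΨ.totalCoalition_of_hexagon hΔ.le
      (fun X hX => hmem X ((List.rotate_perm _ 2).mem_iff.mp hX))
      ((List.rotate_perm _ 2).nodup_iff.mpr hdist) h34.2.2.2 h56.2.2.2 h61.2.2.2 h23.2.2.2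
  exact ⟨⟨c14.2.2.2, c14⟩, ⟨c25.2.2.2, c25⟩, ⟨c36.2.2.2, c36⟩⟩

/-- If `Δ(G) = 3` and six pairwise distinct classes of a total coalition partition form
a `6`-cycle `V₁V₂V₃V₄V₅V₆` in the total coalition graph, then each of the unions
`V₁ ∪ V₄`, `V₂ ∪ V₅`, `V₃ ∪ V₆` is a total dominating set, so each of the three
opposite pairs forms a total coalition. -/
theorem statement_18 [Fintype V] [DecidableEq V]
    (G : SimpleGraph V) [DecidableRel G.Adj] (hG : IsolateFree G)
    (hΔ : G.maxDegree = 3)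
    (Ψ : Finset (Finset V)) (hΨ : IsTCPartition G Ψ)
    (V₁ V₂ V₃ V₄ V₅ V₆ : Finset V)
    (h1 : V₁ ∈ Ψ) (h2 : V₂ ∈ Ψ) (h3 : V₃ ∈ Ψ) (h4 : V₄ ∈ Ψ) (h5 : V₅ ∈ Ψ) (h6 : V₆ ∈ Ψ)
    (hdist : [V₁, V₂, V₃, V₄, V₅, V₆].Pairwise (· ≠ ·))
    (h12 : TotalCoalition G V₁ V₂) (h23 : TotalCoalition G V₂ V₃)
    (h34 : TotalCoalition G V₃ V₄) (h45 : TotalCoalition G V₄ V₅)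
    (h56 : TotalCoalition G V₅ V₆) (h61 : TotalCoalition G V₆ V₁) :
    (TotalDomSet G (V₁ ∪ V₄) ∧ TotalCoalition G V₁ V₄) ∧
    (TotalDomSet G (V₂ ∪ V₅) ∧ TotalCoalition G V₂ V₅) ∧
    (TotalDomSet G (V₃ ∪ V₆) ∧ TotalCoalition G V₃ V₆) :=
  statement_18_general G hΔ Ψ hΨ V₁ V₂ V₃ V₄ V₅ V₆ h1 h2 h3 h4 h5 h6 hdist h12 h23 h34 h45 h56 h61
end
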